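/- Let G₀ ⊇ G₁ ⊇ G₂ ⊇ ⋯ be a descending chain of normal subgroups of a group G = G₀ such that each quotient G_{i-1}/G_i maps with central image into G/G_i, the chain terminates at the trivial subgroup after finitely many steps, and each successive quotient G_{i-1}/G_i is abelian and T-local (uniquely q-divisible for all primes q ∉ T). Then G is a nilpotent group and every element of G has a unique q-th root for every prime q ∉ T. -/

import Mathlib

open scoped commutatorElement

/- The filtration is a descending central series, so `G` is nilpotent. For roots, one climbs the
filtration: a `q`-th root of `x` modulo `Gs j` is corrected by a root, taken in the central
quotient `Gs j / Gs (j + 1)`, of the error term, giving a root modulo `Gs (j + 1)`; since the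
correction is central modulo `Gs (j + 1)`, `(y * w) ^ q ≡ y ^ q * w ^ q` there. Uniqueness is
the same induction run on `y⁻¹ * z` for two roots `y`, `z`. -/

section CentralQuotient

variable {G : Type*} [Group G] {H K : Subgroup G} [K.Normal]

theorem QuotientGroup.mk_mul_pow_of_commutator_mem {y w : G} (h : ⁅w, y⁆ ∈ K) (q : ℕ) :
    (((y * w) ^ q : G) : G ⧸ K) = ((y ^ q : G) : G ⧸ K) * ((w ^ q : G) : G ⧸ K) := by
  have hcomm : Commute (w : G ⧸ K) (y : G ⧸ K) := by
    rw [← commutatorElement_eq_one_iff_commute]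
    exact (map_commutatorElement (QuotientGroup.mk' K) w y).symm.trans
      ((QuotientGroup.eq_one_iff _).mpr h)
  simp only [QuotientGroup.mk_pow, QuotientGroup.mk_mul, hcomm.symm.mul_pow]

theorem exists_pow_mul_inv_mem_of_central [H.Normal] {q : ℕ}
    (hcentral : ∀ w ∈ H, ∀ g : G, ⁅w, g⁆ ∈ K)
    (hroot : ∀ x ∈ H, ∃ w ∈ H, w ^ q * x⁻¹ ∈ K) {x y : G} (h : y ^ q * x⁻¹ ∈ H) :
    ∃ w, (y * w) ^ q * x⁻¹ ∈ K := by
  have herr : (y ^ q)⁻¹ * x ∈ H := by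
    simpa using H.inv_mem (Subgroup.Normal.mem_comm ‹_› h)
  obtain ⟨w, hwH, hw⟩ := hroot _ herr
  refine ⟨w, ?_⟩
  rw [← div_eq_mul_inv, ← QuotientGroup.eq_iff_div_mem] at hw ⊢
  rw [QuotientGroup.mk_mul_pow_of_commutator_mem (hcentral w hwH y), hw, ← QuotientGroup.mk_mul,
    mul_inv_cancel_left]

theorem mem_of_mul_pow_eq_pow_of_central {q : ℕ}
    (hcentral : ∀ w ∈ H, ∀ g : G, ⁅w, g⁆ ∈ K)
    (hinj : ∀ w ∈ H, w ^ q ∈ K → w ∈ K) {y w : G} (hw : w ∈ H) (h : (y * w) ^ q = y ^ q) :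
    w ∈ K := by
  refine hinj w hw ?_
  have hmk := QuotientGroup.mk_mul_pow_of_commutator_mem (hcentral w hw y) q (K := K)
  rwa [h, left_eq_mul, QuotientGroup.eq_one_iff] at hmk

end CentralQuotient

section Filtration

variable {G : Type*} [Group G] {Gs : ℕ → Subgroup G} {q : ℕ}

theorem exists_pow_mul_inv_mem_filtration (htop : Gs 0 = ⊤) (hnormal : ∀ i, (Gs i).Normal)
    (hcentral : ∀ i, ∀ w ∈ Gs i, ∀ g : G, ⁅w, g⁆ ∈ Gs (i + 1))
    (hroot : ∀ i, ∀ x ∈ Gs i, ∃ w ∈ Gs i, w ^ q * x⁻¹ ∈ Gs (i + 1)) (x : G) :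
    ∀ j, ∃ y, y ^ q * x⁻¹ ∈ Gs j
  | 0 => ⟨1, htop ▸ Subgroup.mem_top _⟩
  | j + 1 => by
    have := hnormal j
    have := hnormal (j + 1)
    obtain ⟨y, hy⟩ := exists_pow_mul_inv_mem_filtration htop hnormal hcentral hroot x j
    obtain ⟨w, hw⟩ := exists_pow_mul_inv_mem_of_central (hcentral j) (hroot j) hy
    exact ⟨y * w, hw⟩

theorem inv_mul_mem_filtration_of_pow_eq (htop : Gs 0 = ⊤) (hnormal : ∀ i, (Gs i).Normal)
    (hcentral : ∀ i, ∀ w ∈ Gs i, ∀ g : G, ⁅w, g⁆ ∈ Gs (i + 1))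
    (hinj : ∀ i, ∀ w ∈ Gs i, w ^ q ∈ Gs (i + 1) → w ∈ Gs (i + 1)) {y z : G}
    (h : y ^ q = z ^ q) : ∀ j, y⁻¹ * z ∈ Gs j
  | 0 => htop ▸ Subgroup.mem_top _
  | j + 1 => by
    have := hnormal (j + 1)
    refine mem_of_mul_pow_eq_pow_of_central (y := y) (hcentral j) (hinj j)
      (inv_mul_mem_filtration_of_pow_eq htop hnormal hcentral hinj h j) ?_
    rw [mul_inv_cancel_left, h]

end Filtration

theorem stmt9_general (T : Set ℕ) {G : Type} [Group G] (Gs : ℕ → Subgroup G)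
    (htop : Gs 0 = ⊤)
    (hnormal : ∀ i : ℕ, (Gs i).Normal)
    (hbot : ∃ N : ℕ, Gs N = ⊥)
    (hcentral : ∀ i : ℕ, ∀ x ∈ Gs i, ∀ g : G, ⁅x, g⁆ ∈ Gs (i + 1))
    (hlocal : ∀ i : ℕ, ∀ q : ℕ, q.Prime → q ∉ T →
      (∀ x ∈ Gs i, ∃ y ∈ Gs i, y ^ q * x⁻¹ ∈ Gs (i + 1)) ∧
      (∀ y ∈ Gs i, y ^ q ∈ Gs (i + 1) → y ∈ Gs (i + 1))) :
    Group.IsNilpotent G ∧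
      ∀ q : ℕ, q.Prime → q ∉ T → ∀ x : G, ∃! y : G, y ^ q = x := by
  obtain ⟨N, hN⟩ := hbot
  refine ⟨(Subgroup.nilpotent_iff_finite_descending_central_series G).mpr
    ⟨N, Gs, ⟨htop, fun x i hx g => hcentral i x hx g⟩, hN⟩, fun q hq hqT x => ?_⟩
  obtain ⟨y, hy⟩ := exists_pow_mul_inv_mem_filtration htop hnormal hcentral
    (fun i => (hlocal i q hq hqT).1) x N
  rw [hN, Subgroup.mem_bot, mul_inv_eq_one] at hy
  refine ⟨y, hy, fun z hz => ?_⟩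
  have hyz := inv_mul_mem_filtration_of_pow_eq htop hnormal hcentral
    (fun i => (hlocal i q hq hqT).2) (hy.trans hz.symm) N
  rw [hN, Subgroup.mem_bot, inv_mul_eq_one] at hyz
  exact hyz.symm

/-- let `Gs 0 = ⊤ ⊇ Gs 1 ⊇ ⋯` be a descending chain of normal subgroups of `G`
terminating at `⊥`, such that each quotient `Gs i / Gs (i+1)` maps with central image into
`G / Gs (i+1)` (i.e. `⁅x, g⁆ ∈ Gs (i+1)` for `x ∈ Gs i`, `g ∈ G`; in particular each quotient
is abelian), and each quotient `Gs i / Gs (i+1)` is `T`-local: for every prime `q ∉ T` the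
`q`-th power map is bijective modulo `Gs (i+1)`. Then `G` is nilpotent and every element of
`G` has a unique `q`-th root for every prime `q ∉ T`. -/
theorem stmt9 (T : Set ℕ) {G : Type} [Group G] (Gs : ℕ → Subgroup G)
    (htop : Gs 0 = ⊤)
    (hdesc : ∀ i : ℕ, Gs (i + 1) ≤ Gs i)
    (hnormal : ∀ i : ℕ, (Gs i).Normal)
    (hbot : ∃ N : ℕ, Gs N = ⊥)
    (hcentral : ∀ i : ℕ, ∀ x ∈ Gs i, ∀ g : G, ⁅x, g⁆ ∈ Gs (i + 1))
    (hlocal : ∀ i : ℕ, ∀ q : ℕ, q.Prime → q ∉ T →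
      (∀ x ∈ Gs i, ∃ y ∈ Gs i, y ^ q * x⁻¹ ∈ Gs (i + 1)) ∧
      (∀ y ∈ Gs i, y ^ q ∈ Gs (i + 1) → y ∈ Gs (i + 1))) :
    Group.IsNilpotent G ∧
      ∀ q : ℕ, q.Prime → q ∉ T → ∀ x : G, ∃! y : G, y ^ q = x :=
  stmt9_general T Gs htop hnormal hbot hcentral hlocal
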